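/- arXiv:2601.04865 — 2 statements merged into one kernel-verified Lean document; each statement's English description precedes it below -/
import Mathlib

section
/- Let n ≥ 2 and g ∈ ℝⁿ. Let N_G be the n×n matrix whose columns are g, N₁, …, N_{n−1}, where N_j = g_{j+1} E_j − g_j E_{j+1}. Then det N_G = (−1)^{n−1} |g|² π_n, where π_n = 1 if n = 2 and π_n = g₂ g₃ ⋯ g_{n−1} if n > 2. -/
/-- The vector `N_j = g_{j+1} E_j - g_j E_{j+1}` (0-based indexing of components). -/
def Nvec {n : ℕ} (g : Fin n → ℝ) (j : ℕ) (hj : j + 1 < n) : Fin n → ℝ :=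
  fun i =>
    if (i : ℕ) = j then g ⟨j + 1, hj⟩
    else if (i : ℕ) = j + 1 then -g ⟨j, Nat.lt_of_succ_lt hj⟩
    else 0

/-- The `n × n` matrix whose columns are `g, N_1, …, N_{n-1}`. -/
def NG {n : ℕ} (hn : 2 ≤ n) (g : Fin n → ℝ) : Matrix (Fin n) (Fin n) ℝ :=
  Matrix.of fun i k =>
    if hk : (k : ℕ) = 0 then g i
    else Nvec g ((k : ℕ) - 1) (by have := k.isLt; omega) i

/-- `π_n = 1` for `n = 2` and `π_n = g₂ g₃ ⋯ g_{n-1}` (1-based indexing) for `n > 2`,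
i.e. the product of the components of `g` with 0-based indices `1,…,n-2`. -/
def piProd {n : ℕ} (g : Fin n → ℝ) : ℝ :=
  ∏ j : Fin n, if 1 ≤ (j : ℕ) ∧ (j : ℕ) + 2 ≤ n then g j else 1

lemma piProd_last {m : ℕ} (hm : 2 ≤ m) (g : Fin (m + 1) → ℝ) :
    piProd g = g ⟨m - 1, by omega⟩ * piProd (g ∘ Fin.castSucc) := by
  unfold piProd
  rw [Fin.prod_univ_castSucc]
  have h1 : (if 1 ≤ ((Fin.last m : Fin (m + 1)) : ℕ) ∧
      ((Fin.last m : Fin (m + 1)) : ℕ) + 2 ≤ m + 1 then g (Fin.last m) else 1) = 1 := by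
    rw [if_neg (by simp only [Fin.val_last]; omega)]
  rw [h1, mul_one]
  have key : ∀ j : Fin m,
      (if 1 ≤ ((Fin.castSucc j : Fin (m+1)) : ℕ) ∧ ((Fin.castSucc j : Fin (m+1)) : ℕ) + 2 ≤ m + 1
        then g (Fin.castSucc j) else 1)
      = (if j = (⟨m - 1, by omega⟩ : Fin m) then g (Fin.castSucc j) else 1) *
        (if 1 ≤ (j : ℕ) ∧ (j : ℕ) + 2 ≤ m then (g ∘ Fin.castSucc) j else 1) := by
    intro j
    have hjlt := j.isLt
    simp only [Fin.coe_castSucc, Function.comp_apply]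
    rcases eq_or_ne j (⟨m - 1, by omega⟩ : Fin m) with h | h
    · have hjv : (j : ℕ) = m - 1 := by rw [h]
      rw [if_pos (by omega), if_pos h, if_neg (by omega), mul_one]
    · have hj : (j : ℕ) ≠ m - 1 := fun hc => h (Fin.ext hc)
      rw [if_neg h, one_mul]
      by_cases hc : 1 ≤ (j : ℕ) ∧ (j : ℕ) + 2 ≤ m
      · rw [if_pos (by omega), if_pos hc]
      · rw [if_neg (by omega), if_neg hc]
  rw [Finset.prod_congr rfl fun j _ => key j, Finset.prod_mul_distrib,
    Finset.prod_ite_eq' Finset.univ (⟨m - 1, by omega⟩ : Fin m) (fun j => g (Fin.castSucc j)),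
    if_pos (Finset.mem_univ _)]
  congr 1

lemma prod_succ_eq {m : ℕ} (hm : 1 ≤ m) (g : Fin (m + 1) → ℝ) :
    ∏ k : Fin m, g k.succ = g (Fin.last m) * piProd g := by
  unfold piProd
  rw [Fin.prod_univ_succ]
  have h0 : (if 1 ≤ ((0 : Fin (m+1)) : ℕ) ∧ ((0 : Fin (m+1)) : ℕ) + 2 ≤ m + 1
      then g 0 else 1) = 1 := by rw [if_neg]; simp
  rw [h0, one_mul]
  have key : ∀ k : Fin m,
      g k.succ = (if k = (⟨m - 1, by omega⟩ : Fin m) then g k.succ else 1) *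
        (if 1 ≤ ((Fin.succ k : Fin (m+1)) : ℕ) ∧ ((Fin.succ k : Fin (m+1)) : ℕ) + 2 ≤ m + 1
          then g k.succ else 1) := by
    intro k
    have hklt := k.isLt
    simp only [Fin.val_succ]
    rcases eq_or_ne k (⟨m - 1, by omega⟩ : Fin m) with h | h
    · have hkv : (k : ℕ) = m - 1 := by rw [h]
      rw [if_pos h, if_neg (by omega), mul_one]
    · have hk : (k : ℕ) ≠ m - 1 := fun hc => h (Fin.ext hc)
      rw [if_neg h, one_mul, if_pos (by omega)]
  rw [Finset.prod_congr rfl fun k _ => key k, Finset.prod_mul_distrib,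
    Finset.prod_ite_eq' Finset.univ (⟨m - 1, by omega⟩ : Fin m) (fun k => g k.succ),
    if_pos (Finset.mem_univ _)]
  congr 2
  exact Fin.ext (by simp [Fin.last]; omega)

theorem stmt3 (n : ℕ) (hn : 2 ≤ n) (g : Fin n → ℝ) :
    (NG hn g).det = (-1) ^ (n - 1) * (∑ i, g i ^ 2) * piProd g := by
  induction n, hn using Nat.le_induction with
  | base =>
    rw [show (NG (by norm_num) g).det
        = (NG (by norm_num) g 0 0) * (NG (by norm_num) g 1 1)
          - (NG (by norm_num) g 0 1) * (NG (by norm_num) g 1 0) from Matrix.det_fin_two _]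
    simp [NG, Nvec, piProd, Fin.sum_univ_two, Fin.prod_univ_two]
    ring
  | succ m hm IH =>
    have hn' : 2 ≤ m + 1 := by omega
    -- Laplace expansion along the last row
    rw [Matrix.det_succ_row (NG hn' g) (Fin.last m)]
    rw [Finset.sum_eq_add_of_mem (0 : Fin (m + 1)) (Fin.last m)
      (Finset.mem_univ _) (Finset.mem_univ _)
      (by simp [Fin.ext_iff, Fin.last]; omega)
      ?_]
    · -- main computation
      have e00 : NG hn' g (Fin.last m) (0 : Fin (m+1)) = g (Fin.last m) := by
        simp only [NG, Matrix.of_apply, Fin.val_zero]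
        exact dif_pos rfl
      have e11 : NG hn' g (Fin.last m) (Fin.last m) = -g ⟨m - 1, by omega⟩ := by
        simp only [NG, Matrix.of_apply, Fin.val_last]
        rw [dif_neg (by omega), Nvec]
        rw [if_neg (show ¬((Fin.last m : ℕ) = m - 1) by simp only [Fin.val_last]; omega),
          if_pos (show (Fin.last m : ℕ) = m - 1 + 1 by simp only [Fin.val_last]; omega)]
      -- first minor: lower bidiagonal
      have hminor0 : ((NG hn' g).submatrix (Fin.last m).succAbove
          ((0 : Fin (m+1)).succAbove)).det = ∏ k : Fin m, g k.succ := by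
        have hB : ∀ i k : Fin m, (NG hn' g).submatrix (Fin.last m).succAbove
            ((0 : Fin (m+1)).succAbove) i k
            = Nvec g (k : ℕ) (by have := k.isLt; omega) (Fin.castSucc i) := by
          intro i k
          simp only [Matrix.submatrix_apply, Fin.succAbove_last, Fin.succAbove_zero, NG,
            Matrix.of_apply]
          rw [dif_neg (by simp)]
          rfl
        rw [Matrix.det_of_lowerTriangular _ ?_]
        · refine Finset.prod_congr rfl fun k _ => ?_
          rw [hB k k, Nvec]
          simp only [Fin.coe_castSucc]
          rw [if_pos trivial]
          rfl
        · intro i k hik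
          have hik' : (i : ℕ) < (k : ℕ) := hik
          rw [hB i k, Nvec]
          simp only [Fin.coe_castSucc]
          rw [if_neg (by omega), if_neg (by omega)]
      -- second minor : NG of truncated g
      have hminor1 : ((NG hn' g).submatrix (Fin.last m).succAbove
          ((Fin.last m).succAbove)) = NG hm (g ∘ Fin.castSucc) := by
        ext i k
        simp only [Matrix.submatrix_apply, Fin.succAbove_last, NG, Matrix.of_apply,
          Fin.coe_castSucc]
        rcases Nat.eq_zero_or_pos (k : ℕ) with hk | hk
        · rw [dif_pos hk, dif_pos hk]; rfl
        · rw [dif_neg (by omega), dif_neg (by omega), Nvec, Nvec]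
          simp only [Fin.coe_castSucc]
          have hklt := k.isLt
          split_ifs with h1 h2
          · exact congrArg g (Fin.ext rfl)
          · exact congrArg (fun x => -g x) (Fin.ext rfl)
          · rfl
      rw [hminor0, hminor1, IH, e00, e11, prod_succ_eq (by omega) g,
        piProd_last hm g, Fin.sum_univ_castSucc (f := fun i => g i ^ 2)]
      have hpow1 : (-1 : ℝ) ^ ((Fin.last m : Fin (m+1)) : ℕ) = (-1 : ℝ) ^ m := rfl
      have hpow2 : (-1 : ℝ) ^ (((Fin.last m : Fin (m+1)) : ℕ) + ((Fin.last m : Fin (m+1)) : ℕ))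
          = 1 := Even.neg_one_pow ⟨m, rfl⟩
      have hc0 : ((0 : Fin (m + 1)) : ℕ) = 0 := rfl
      have hpow3 : (-1 : ℝ) ^ m = (-1 : ℝ) ^ (m - 1) * (-1) := by
        rw [← pow_succ]; congr 1; omega
      have hmm : (m + 1 - 1) = m := by omega
      rw [hc0, Nat.add_zero, hpow1, hpow2, hmm, hpow3]
      simp only [Function.comp_apply]
      ring
    · -- all other terms vanish
      intro j _ hj
      obtain ⟨hj0, hjl⟩ := hj
      have hj0' : (j : ℕ) ≠ 0 := fun hc => hj0 (Fin.ext hc)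
      have hjl' : (j : ℕ) ≠ m := fun hc => hjl (Fin.ext hc)
      have hjlt := j.isLt
      have : NG hn' g (Fin.last m) j = 0 := by
        rw [NG]
        simp only [Matrix.of_apply]
        rw [dif_neg hj0', Nvec]
        simp only [Fin.val_last]
        rw [if_neg (by omega), if_neg (by omega)]
      rw [this]
      ring
end

section
/- Let g̃ = (g₀, g₁, …, gₙ) ∈ ℝ^{n+1} with g₁ ≠ 0, and define Ñ₀ = (1, −g₀/g₁, 0, …, 0) and Ñ_j = g_{j+1} E_j − g_j E_{j+1} for j = 1, …, n−1 (components indexed 0 through n). If additionally g₂ ≠ 0, …, g_{n−1} ≠ 0 when n > 2, then the vectors g̃, Ñ₀, Ñ₁, …, Ñ_{n−1} are linearly independent, and the determinant of the (n+1)×(n+1) matrix formed by these columns equals (−1)ⁿ |g̃|² π_n, where π_n = 1 for n = 2 and π_n = g₂g₃⋯g_{n−1} for n > 2. -/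
/-- The `(n+1) × (n+1)` matrix (components indexed from `0` to `n`) whose columns are
`g̃`, `Ñ₀ = (1, -g₀/g₁, 0, …, 0)` and `Ñ_j = g_{j+1} E_j - g_j E_{j+1}` for
`j = 1, …, n-1`. -/
noncomputable def NGtilde {n : ℕ} (hn : 2 ≤ n) (g : Fin (n + 1) → ℝ) :
    Matrix (Fin (n + 1)) (Fin (n + 1)) ℝ :=
  Matrix.of fun i k =>
    if (k : ℕ) = 0 then g i
    else if (k : ℕ) = 1 then
      (if (i : ℕ) = 0 then 1
       else if (i : ℕ) = 1 then -g ⟨0, Nat.succ_pos n⟩ / g ⟨1, by omega⟩ else 0)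
    else
      (if (i : ℕ) = (k : ℕ) - 1 then g k
       else if (i : ℕ) = (k : ℕ) then -g ⟨(k : ℕ) - 1, by have := k.isLt; omega⟩
       else 0)

/-- `π_n = 1` for `n = 2` and `π_n = g₂ g₃ ⋯ g_{n-1}` for `n > 2`. -/
def piProdT {n : ℕ} (g : Fin (n + 1) → ℝ) : ℝ :=
  ∏ j : Fin (n + 1), if 2 ≤ (j : ℕ) ∧ (j : ℕ) + 1 ≤ n then g j else 1

private lemma piProdT_eq_Ico (m : ℕ) (g : Fin (m + 1) → ℝ) :
    piProdT g = ∏ j ∈ Finset.Ico 2 m, (if h : j < m + 1 then g ⟨j, h⟩ else 1) := by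
  have h1 : piProdT g = ∏ j ∈ Finset.range (m + 1),
      (if 2 ≤ j ∧ j + 1 ≤ m then (if h : j < m + 1 then g ⟨j, h⟩ else 1) else 1) := by
    rw [← Fin.prod_univ_eq_prod_range]
    unfold piProdT
    refine Finset.prod_congr rfl fun i _ => ?_
    split_ifs with h h'
    · rfl
    · exact absurd i.isLt h'
    · rfl
  rw [h1, ← Finset.prod_subset (s₁ := Finset.Ico 2 m)
      (fun x hx => Finset.mem_range.mpr (by simp only [Finset.mem_Ico] at hx; omega))
      (fun x _ hx => by
        rw [if_neg]
        simp only [Finset.mem_Ico, not_and, not_le] at hx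
        omega)]
  refine Finset.prod_congr rfl fun j hj => ?_
  simp only [Finset.mem_Ico] at hj
  rw [if_pos (by omega)]

private lemma det_NG : ∀ (n : ℕ) (hn : 2 ≤ n) (g : Fin (n + 1) → ℝ),
    g ⟨1, by omega⟩ ≠ 0 →
    (NGtilde hn g).det = (-1) ^ n * (∑ i, g i ^ 2) * piProdT g := by
  intro n hn
  induction n, hn using Nat.le_induction with
  | base =>
    intro g hg1
    have hπ : piProdT g = 1 := by
      unfold piProdT
      refine Finset.prod_eq_one fun j _ => ?_
      rw [if_neg (by omega)]
    have hg1' : g 1 ≠ 0 := hg1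
    rw [hπ, Matrix.det_fin_three, Fin.sum_univ_three]
    simp only [NGtilde, Matrix.of_apply, Fin.val_zero, Fin.val_one, Fin.val_two]
    norm_num
    field_simp
  | succ n hn ih =>
    intro g hg1
    have h2 : (2 : ℕ) ≤ n + 1 := by omega
    have hnlt : n < n + 2 := by omega
    show (NGtilde h2 g).det = (-1) ^ (n + 1) * (∑ i, g i ^ 2) * piProdT g
    rw [Matrix.det_succ_row (NGtilde h2 g) (Fin.last (n + 1))]
    have hzero : ∀ j : Fin (n + 2), j ∉ ({0, Fin.last (n + 1)} : Finset (Fin (n + 2))) →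
        NGtilde h2 g (Fin.last (n + 1)) j = 0 := by
      intro j hj
      simp only [Finset.mem_insert, Finset.mem_singleton, not_or] at hj
      obtain ⟨hj0, hjl⟩ := hj
      have hj0' : (j : ℕ) ≠ 0 := fun h => hj0 (Fin.ext h)
      have hjl' : (j : ℕ) ≠ n + 1 := fun h => hjl (Fin.ext h)
      have hjlt := j.isLt
      simp only [NGtilde, Matrix.of_apply, Fin.val_last]
      split_ifs <;> first | rfl | (exfalso; first | exact ‹False› | omega)
    rw [← Finset.sum_subset
        (Finset.subset_univ ({0, Fin.last (n + 1)} : Finset (Fin (n + 2))))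
        (fun x _ hx => by rw [hzero x hx]; ring)]
    rw [Finset.sum_pair (show (0 : Fin (n + 2)) ≠ Fin.last (n + 1) by
      simp [Fin.ext_iff])]
    -- entries of the last row
    have e0 : NGtilde h2 g (Fin.last (n + 1)) 0 = g (Fin.last (n + 1)) := by
      simp [NGtilde]
    have e1 : NGtilde h2 g (Fin.last (n + 1)) (Fin.last (n + 1)) = -g ⟨n, hnlt⟩ := by
      simp only [NGtilde, Matrix.of_apply, Fin.val_last]
      split_ifs <;> first | rfl | (exfalso; first | exact ‹False› | omega)
    -- the minor at column `last` is `NGtilde` for `n`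
    have hS1 : (NGtilde h2 g).submatrix (Fin.last (n + 1)).succAbove
        (Fin.last (n + 1)).succAbove = NGtilde hn (fun i => g i.castSucc) := by
      rw [Fin.succAbove_last]
      ext i k
      simp only [Matrix.submatrix_apply, NGtilde, Matrix.of_apply, Fin.coe_castSucc]
      split_ifs <;> simp [Fin.castSucc_mk]
    -- the minor at column `0` is lower triangular
    have htri : ((NGtilde h2 g).submatrix (Fin.last (n + 1)).succAbove
        (0 : Fin (n + 2)).succAbove).BlockTriangular OrderDual.toDual := by
      intro i j hij
      have hlt : (i : ℕ) < (j : ℕ) := hij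
      simp only [Matrix.submatrix_apply, Fin.succAbove_last, Fin.succAbove_zero,
        NGtilde, Matrix.of_apply, Fin.coe_castSucc, Fin.val_succ]
      split_ifs <;> first | rfl | (exfalso; first | exact ‹False› | omega)
    have hS0 : ((NGtilde h2 g).submatrix (Fin.last (n + 1)).succAbove
        (0 : Fin (n + 2)).succAbove).det = piProdT g * g (Fin.last (n + 1)) := by
      rw [Matrix.det_of_lowerTriangular _ htri]
      simp only [Matrix.submatrix_apply, Fin.succAbove_last, Fin.succAbove_zero]
      rw [Fin.prod_univ_succ]
      have d0 : NGtilde h2 g (Fin.castSucc (0 : Fin (n + 1))) (Fin.succ 0) = 1 := by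
        simp only [NGtilde, Matrix.of_apply, Fin.coe_castSucc, Fin.val_succ, Fin.val_zero]
        norm_num
      rw [d0, one_mul]
      have hdiag : ∀ i : Fin n,
          NGtilde h2 g (Fin.castSucc i.succ) i.succ.succ = g i.succ.succ := by
        intro i
        simp only [NGtilde, Matrix.of_apply, Fin.coe_castSucc, Fin.val_succ]
        rw [if_neg (by omega), if_neg (by omega), if_pos (by omega)]
      rw [Finset.prod_congr rfl fun i _ => hdiag i]
      -- now compute the right hand side
      rw [piProdT_eq_Ico (n + 1) g]
      have hlast : g (Fin.last (n + 1)) =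
          (if h : n + 1 < n + 2 then g ⟨n + 1, h⟩ else 1) := by
        rw [dif_pos (by omega)]
        congr 1
      rw [hlast, ← Finset.prod_Ico_succ_top (by omega : 2 ≤ n + 1),
        Finset.prod_Ico_eq_prod_range]
      simp only [Nat.add_sub_cancel_left, show n + 2 - 2 = n from rfl]
      rw [← Fin.prod_univ_eq_prod_range (fun k => if h : 2 + k < n + 2 then g ⟨2 + k, h⟩ else 1) n]
      refine Finset.prod_congr rfl fun i _ => ?_
      rw [dif_pos (by omega)]
      congr 1
      simp [Fin.ext_iff, Fin.val_succ]
      omega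
    rw [e0, e1, hS0, hS1,
      ih (fun i => g i.castSucc) (by simpa [Fin.castSucc_mk] using hg1)]
    have hpi : piProdT g = piProdT (fun i : Fin (n + 1) => g i.castSucc) * g ⟨n, hnlt⟩ := by
      rw [piProdT_eq_Ico (n + 1) g, piProdT_eq_Ico n (fun i : Fin (n + 1) => g i.castSucc),
        Finset.prod_Ico_succ_top (by omega : 2 ≤ n)]
      congr 1
      · refine Finset.prod_congr rfl fun j hj => ?_
        simp only [Finset.mem_Ico] at hj
        rw [dif_pos (by omega), dif_pos (by omega), Fin.castSucc_mk]
      · rw [dif_pos (by omega)]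
    rw [hpi]
    have hsum : (∑ i : Fin (n + 2), g i ^ 2) =
        (∑ i : Fin (n + 1), g i.castSucc ^ 2) + g (Fin.last (n + 1)) ^ 2 :=
      Fin.sum_univ_castSucc (fun i => g i ^ 2)
    rw [hsum]
    simp only [Fin.val_last, Fin.val_zero, add_zero]
    rw [show (-1 : ℝ) ^ (n + 1 + (n + 1)) = 1 from Even.neg_one_pow ⟨n + 1, by ring⟩,
      pow_succ]
    ring

theorem stmt19 (n : ℕ) (hn : 2 ≤ n) (g : Fin (n + 1) → ℝ)
    (hg1 : g ⟨1, by omega⟩ ≠ 0)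
    (hg : ∀ j : Fin (n + 1), 2 ≤ (j : ℕ) → (j : ℕ) + 1 ≤ n → g j ≠ 0) :
    LinearIndependent ℝ (fun k : Fin (n + 1) => fun i => NGtilde hn g i k) ∧
    (NGtilde hn g).det = (-1) ^ n * (∑ i, g i ^ 2) * piProdT g := by
  have hdet := det_NG n hn g hg1
  refine ⟨?_, hdet⟩
  have hsum : (0 : ℝ) < ∑ i, g i ^ 2 :=
    Finset.sum_pos' (fun i _ => sq_nonneg _)
      ⟨⟨1, by omega⟩, Finset.mem_univ _,
        lt_of_le_of_ne (sq_nonneg _) (Ne.symm (pow_ne_zero 2 hg1))⟩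
  have hpi : piProdT g ≠ 0 := by
    unfold piProdT
    rw [Finset.prod_ne_zero_iff]
    intro j _
    split_ifs with h
    · exact hg j h.1 h.2
    · norm_num
  have hdet0 : (NGtilde hn g).det ≠ 0 := by
    rw [hdet]
    exact mul_ne_zero (mul_ne_zero (pow_ne_zero _ (by norm_num)) hsum.ne') hpi
  have hunit : IsUnit (NGtilde hn g) :=
    (Matrix.isUnit_iff_isUnit_det _).mpr (isUnit_iff_ne_zero.mpr hdet0)
  exact Matrix.linearIndependent_cols_iff_isUnit.mpr hunit
end
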